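/- Let f : I → I be a continuous interval map, x ∈ I with solenoidal ω-limit set structured by nested periodic intervals K_a (a ∈ Σ^t) of period p_t as usual, with the orbit of x contained in Q_t and avoiding the boundaries of the intervals K_a. For m ∈ ℕ ∪ {∞}, t ≥ 0, ε > 0, define N_m(x,t,ε) = card{(a,b) ∈ Σ^t × Σ^t : dist_m(K_a, K_b) < ε} and N°_m(x,t,ε) = card{(a,b) : diam_m(K_a, K_b) ≤ ε}, where dist_m(K_a,K_b) = max_{0≤i<m} dist(K_{a+i}, K_{b+i}) and diam_m(K_a,K_b) = max_{0≤i<m} diam(K_{a+i} ∪ K_{b+i}). Then N°_m(x,t,ε)·p_t^{−2} ≤ C̲_m(x,ε) ≤ C̄_m(x,ε) ≤ N_m(x,t,ε)·p_t^{−2}. -/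

import Mathlib

open Filter Metric Set
open scoped Classical

namespace RQA

variable {X : Type*} [MetricSpace X]

/-- Correlation sum `C_m(x,n,ε)` with respect to the Bowen metric `ρ_m`:
`ρ_m(f^[i] x, f^[j] x) ≤ ε ↔ ∀ k < m, dist (f^[i+k] x) (f^[j+k] x) ≤ ε`. -/
noncomputable def corrSum (f : X → X) (x : X) (m n : ℕ) (ε : ℝ) : ℝ :=
  (((Finset.range n ×ˢ Finset.range n).filter
      (fun p => ∀ k < m, dist (f^[p.1 + k] x) (f^[p.2 + k] x) ≤ ε)).card : ℝ) / (n : ℝ) ^ 2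

/-- Correlation sum `C_∞(x,n,ε)` with respect to the metric `ρ_∞`. -/
noncomputable def corrSumInf (f : X → X) (x : X) (n : ℕ) (ε : ℝ) : ℝ :=
  (((Finset.range n ×ˢ Finset.range n).filter
      (fun p => ∀ k : ℕ, dist (f^[p.1 + k] x) (f^[p.2 + k] x) ≤ ε)).card : ℝ) / (n : ℝ) ^ 2

/-- Lower asymptotic correlation sum `C̲_m(x,ε)`. -/
noncomputable def lowerCorr (f : X → X) (x : X) (m : ℕ) (ε : ℝ) : ℝ :=
  liminf (fun n => corrSum f x m n ε) atTop

/-- Upper asymptotic correlation sum `C̄_m(x,ε)`. -/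
noncomputable def upperCorr (f : X → X) (x : X) (m : ℕ) (ε : ℝ) : ℝ :=
  limsup (fun n => corrSum f x m n ε) atTop

/-- Recurrence `m`-determinism `DET_m(x,n,ε) = C_m(x,n,ε)/C_1(x,n,ε)`. -/
noncomputable def detSum (f : X → X) (x : X) (m n : ℕ) (ε : ℝ) : ℝ :=
  corrSum f x m n ε / corrSum f x 1 n ε

/-- Recurrence `∞`-determinism `DET_∞(x,n,ε) = C_∞(x,n,ε)/C_1(x,n,ε)`. -/
noncomputable def detSumInf (f : X → X) (x : X) (n : ℕ) (ε : ℝ) : ℝ :=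
  corrSumInf f x n ε / corrSum f x 1 n ε

/-- Lower asymptotic recurrence determinism `DET̲_m(x,ε)`. -/
noncomputable def lowerDet (f : X → X) (x : X) (m : ℕ) (ε : ℝ) : ℝ :=
  liminf (fun n => detSum f x m n ε) atTop

/-- Upper asymptotic recurrence determinism `DET̄_m(x,ε)`. -/
noncomputable def upperDet (f : X → X) (x : X) (m : ℕ) (ε : ℝ) : ℝ :=
  limsup (fun n => detSum f x m n ε) atTop

/-- `C̄_∞(x,ε) = lim_m C̄_m(x,ε)`; since `m ↦ C̄_m(x,ε)` is non-increasing,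
the limit equals the infimum over `m ≥ 1`. -/
noncomputable def upperCorrInf (f : X → X) (x : X) (ε : ℝ) : ℝ :=
  ⨅ m : ℕ, upperCorr f x (m + 1) ε

/-- `C̲_∞(x,ε) = lim_m C̲_m(x,ε)` (a limit of a non-increasing sequence). -/
noncomputable def lowerCorrInf (f : X → X) (x : X) (ε : ℝ) : ℝ :=
  ⨅ m : ℕ, lowerCorr f x (m + 1) ε

/-- `DET̄_∞(x,ε) = lim_m DET̄_m(x,ε)` (a limit of a non-increasing sequence). -/
noncomputable def upperDetInf (f : X → X) (x : X) (ε : ℝ) : ℝ :=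
  ⨅ m : ℕ, upperDet f x (m + 1) ε

/-- `DET̲_∞(x,ε) = lim_m DET̲_m(x,ε)` (a limit of a non-increasing sequence). -/
noncomputable def lowerDetInf (f : X → X) (x : X) (ε : ℝ) : ℝ :=
  ⨅ m : ℕ, lowerDet f x (m + 1) ε

/-- The ω-limit set of `x`: the set of limit points of the trajectory `(f^[n] x)`. -/
def omegaSet (f : X → X) (x : X) : Set X :=
  {y | ∃ φ : ℕ → ℕ, StrictMono φ ∧ Tendsto (fun n => f^[φ n] x) atTop (nhds y)}

/-- Distance between two subsets of `ℝ`. -/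
noncomputable def setDist (A B : Set ℝ) : ℝ :=
  sInf {d | ∃ a ∈ A, ∃ b ∈ B, d = dist a b}

/-- The binary word of length `t` given by the binary digits of `n`
(the 2-adic encoding, least significant digit first; addition of integers to
words is addition with carry from left to right, i.e. ordinary addition of the
encoded values modulo `2^t`). -/
def word (t n : ℕ) : Fin t → Bool := fun i => n.testBit i.val

/-- The value `∑ w_i 2^i` of a binary word under the 2-adic encoding. -/
def encodeWord {t : ℕ} (w : Fin t → Bool) : ℕ :=
  ∑ i : Fin t, if w i then 2 ^ i.val else 0

end RQA

open RQA

/-!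
Every orbit point `f^[i] x` lies in the interior of `K i`, and `K` is `p`-periodic with
`K 0, …, K (p-1)` pairwise disjoint. Hence whether `ρ_m(f^[i] x, f^[j] x) ≤ ε` is squeezed between
two conditions on the residues `(i mod p, j mod p)`: `diam_m(K_i, K_j) ≤ ε` implies it, and it
implies `dist_m(K_i, K_j) < ε` (strictly, because the orbit avoids the endpoints of the intervals).
Each residue pair has density `1/p²` in `[0, n)²`, which squeezes the correlation sums. For `m = ∞`
the lower bound passes to the infimum over `m`, and the upper bound because the finitely many
conditions `dist_m < ε` stabilise for large `m`.
-/

open Finset Topology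

section ResidueDensity

variable {p : ℕ}

lemma tendsto_card_filter_mod_eq_div (hp : 0 < p) {a : ℕ} (ha : a < p) :
    Tendsto (fun n : ℕ => (#{i ∈ range n | i % p = a} : ℝ) / n) atTop (𝓝 (1 / p)) := by
  have hcount : ∀ n : ℕ, |(#{i ∈ range n | i % p = a} : ℝ) - n / p| ≤ 1 := by
    intro n
    have hc : #{i ∈ range n | i % p = a} = n / p + if a % p < n % p then 1 else 0 := by
      rw [← Nat.count_modEq_card n hp a, Nat.count_eq_card_filter_range]
      simp only [Nat.ModEq, Nat.mod_eq_of_lt ha]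
    have hfloor : ((n / p : ℕ) : ℝ) = ⌊(n : ℝ) / p⌋₊ := by rw [Nat.floor_div_eq_div n p]
    have h1 := Nat.floor_le (show 0 ≤ (n : ℝ) / p by positivity)
    have h2 := Nat.lt_floor_add_one ((n : ℝ) / p)
    rw [abs_le, hc]
    split_ifs <;> push_cast <;> constructor <;> linarith
  have hinv : Tendsto (fun n : ℕ => 1 / (n : ℝ)) atTop (𝓝 0) := tendsto_one_div_atTop_nhds_zero_nat
  refine tendsto_of_tendsto_of_tendsto_of_le_of_le'
    (by simpa only [sub_zero] using tendsto_const_nhds.sub hinv)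
    (by simpa only [add_zero] using tendsto_const_nhds.add hinv) ?_ ?_
  all_goals
    filter_upwards [eventually_gt_atTop 0] with n hn
    have hnR : (0 : ℝ) < n := Nat.cast_pos.mpr hn
    obtain ⟨hlow, hhigh⟩ := abs_le.mp (hcount n)
  · calc 1 / (p : ℝ) - 1 / n = ((n : ℝ) / p - 1) / n := by field_simp
      _ ≤ _ := by gcongr; linarith
  · calc _ ≤ ((n : ℝ) / p + 1) / n := by gcongr; linarith
      _ = 1 / (p : ℝ) + 1 / n := by field_simp

def residuePairs (p n : ℕ) (S : Finset (ℕ × ℕ)) : Finset (ℕ × ℕ) :=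
  {q ∈ range n ×ˢ range n | (q.1 % p, q.2 % p) ∈ S}

lemma card_residuePairs (n : ℕ) (S : Finset (ℕ × ℕ)) :
    #(residuePairs p n S) =
      ∑ s ∈ S, #{i ∈ range n | i % p = s.1} * #{i ∈ range n | i % p = s.2} := by
  rw [card_eq_sum_card_fiberwise (s := residuePairs p n S)
    (f := fun q : ℕ × ℕ => (q.1 % p, q.2 % p)) (t := S) fun q hq => (mem_filter.mp hq).2]
  refine sum_congr rfl fun s _ => ?_
  rw [← card_product, ← filter_product]
  congr 1
  ext q
  simp only [residuePairs, mem_filter, Prod.ext_iff]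
  grind

lemma tendsto_card_residuePairs (hp : 0 < p) {S : Finset (ℕ × ℕ)} (hS : S ⊆ range p ×ˢ range p) :
    Tendsto (fun n : ℕ => (#(residuePairs p n S) : ℝ) / n ^ 2) atTop (𝓝 (#S / p ^ 2)) := by
  have hterm : ∀ s ∈ S, Tendsto (fun n : ℕ => (#{i ∈ range n | i % p = s.1} : ℝ) / n *
      (#{i ∈ range n | i % p = s.2} / n)) atTop (𝓝 (1 / p * (1 / p))) := fun s hs => by
    obtain ⟨h1, h2⟩ := mem_product.mp (hS hs)
    exact (tendsto_card_filter_mod_eq_div hp (mem_range.mp h1)).mul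
      (tendsto_card_filter_mod_eq_div hp (mem_range.mp h2))
  convert tendsto_finsetSum S hterm using 2
  · rw [card_residuePairs, Nat.cast_sum, sum_div]
    push_cast
    refine sum_congr rfl fun s _ => ?_
    ring
  · rw [sum_const, nsmul_eq_mul]
    ring

end ResidueDensity

lemma le_liminf_and_limsup_le_of_squeeze {u a b : ℕ → ℝ} {α β : ℝ}
    (ha : Tendsto a atTop (𝓝 α)) (hb : Tendsto b atTop (𝓝 β))
    (hau : ∀ n, a n ≤ u n) (hub : ∀ n, u n ≤ b n) :
    α ≤ liminf u atTop ∧ liminf u atTop ≤ limsup u atTop ∧ limsup u atTop ≤ β := by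
  have hle : IsBoundedUnder (· ≤ ·) atTop u :=
    hb.isBoundedUnder_le.mono_le (Eventually.of_forall hub)
  have hge : IsBoundedUnder (· ≥ ·) atTop u :=
    ha.isBoundedUnder_ge.mono_ge (Eventually.of_forall hau)
  refine ⟨?_, liminf_le_limsup hle hge, ?_⟩
  · rw [← ha.liminf_eq]
    exact liminf_le_liminf (Eventually.of_forall hau) ha.isBoundedUnder_ge hle.isCoboundedUnder_ge
  · rw [← hb.limsup_eq]
    exact limsup_le_limsup (Eventually.of_forall hub) hge.isCoboundedUnder_le hb.isBoundedUnder_le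

theorem corr_bounds_of_residue_squeeze {X : Type*} [MetricSpace X] (f : X → X) (x : X)
    (m : ℕ) (ε : ℝ) {p : ℕ} (hp : 0 < p) {Slow Shigh : Finset (ℕ × ℕ)}
    (hSlow : Slow ⊆ range p ×ˢ range p) (hShigh : Shigh ⊆ range p ×ˢ range p)
    (hlow : ∀ i j, (i % p, j % p) ∈ Slow → ∀ k < m, dist (f^[i + k] x) (f^[j + k] x) ≤ ε)
    (hhigh : ∀ i j, (∀ k < m, dist (f^[i + k] x) (f^[j + k] x) ≤ ε) → (i % p, j % p) ∈ Shigh) :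
    (#Slow : ℝ) / p ^ 2 ≤ lowerCorr f x m ε ∧ lowerCorr f x m ε ≤ upperCorr f x m ε ∧
      upperCorr f x m ε ≤ (#Shigh : ℝ) / p ^ 2 := by
  refine le_liminf_and_limsup_le_of_squeeze (tendsto_card_residuePairs hp hSlow)
    (tendsto_card_residuePairs hp hShigh) (fun n => ?_) (fun n => ?_)
  all_goals
    unfold corrSum
    gcongr
    intro q hq
    simp only [residuePairs, mem_filter] at hq ⊢
  exacts [⟨hq.1, hlow _ _ hq.2⟩, ⟨hq.1, hhigh _ _ hq.2⟩]

lemma setDist_le_dist {A B : Set ℝ} {a b : ℝ} (ha : a ∈ A) (hb : b ∈ B) :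
    setDist A B ≤ dist a b :=
  csInf_le ⟨0, by rintro _ ⟨a, -, b, -, rfl⟩; exact dist_nonneg⟩ ⟨a, ha, b, hb, rfl⟩

lemma setDist_Icc_lt_dist {y z u v : ℝ} {B : Set ℝ} (hu : u ∈ Set.Ioo y z) (hv : v ∈ B)
    (hvI : v ∉ Set.Icc y z) : setDist (Set.Icc y z) B < dist u v := by
  have hyz : y ≤ z := (hu.1.trans hu.2).le
  rw [Set.mem_Icc, not_and_or, not_le, not_le] at hvI
  rcases hvI with hvy | hzv
  · calc setDist (Set.Icc y z) B ≤ dist y v := setDist_le_dist (Set.left_mem_Icc.mpr hyz) hv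
      _ < dist u v := by rw [Real.dist_eq, Real.dist_eq, abs_of_pos, abs_of_pos] <;> linarith [hu.1]
  · calc setDist (Set.Icc y z) B ≤ dist z v := setDist_le_dist (Set.right_mem_Icc.mpr hyz) hv
      _ < dist u v := by rw [Real.dist_eq, Real.dist_eq, abs_of_neg, abs_of_neg] <;> linarith [hu.2]

lemma setDist_lt_of_mem_interior {A B : Set ℝ} {u v ε : ℝ} (hA : ∃ y z, A = Set.Icc y z)
    (hAB : A = B ∨ Disjoint A B) (hu : u ∈ interior A) (hv : v ∈ B) (hε : 0 < ε)
    (huv : dist u v ≤ ε) : setDist A B < ε := by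
  obtain ⟨y, z, rfl⟩ := hA
  rcases hAB with rfl | hdisj
  · calc setDist (Set.Icc y z) (Set.Icc y z) ≤ dist u u :=
          setDist_le_dist (interior_subset hu) (interior_subset hu)
      _ < ε := by rwa [dist_self]
  · rw [interior_Icc] at hu
    exact (setDist_Icc_lt_dist hu hv (disjoint_right.mp hdisj hv)).trans_le huv

section PeriodicIntervals

variable {p : ℕ} {K : ℕ → Set ℝ}

lemma Function.Periodic.map_mod_add_nat (hK : Function.Periodic K p) (i k : ℕ) :
    K (i % p + k) = K (i + k) := by
  rw [← hK.map_mod_nat (i % p + k), ← hK.map_mod_nat (i + k), Nat.mod_add_mod]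

lemma eq_or_disjoint_of_periodic (hp : 0 < p) (hK : Function.Periodic K p)
    (hdisj : ∀ i j : ℕ, i < p → j < p → i ≠ j → Disjoint (K i) (K j)) (i j : ℕ) :
    K i = K j ∨ Disjoint (K i) (K j) := by
  rw [← hK.map_mod_nat i, ← hK.map_mod_nat j]
  by_cases h : i % p = j % p
  · exact Or.inl (by rw [h])
  · exact Or.inr (hdisj _ _ (Nat.mod_lt _ hp) (Nat.mod_lt _ hp) h)

theorem corr_bounds_of_periodic_intervals (f : ℝ → ℝ) (x : ℝ) (hp : 0 < p)
    (hKper : Function.Periodic K p) (hK : ∀ i, ∃ y z : ℝ, K i = Set.Icc y z)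
    (hdisj : ∀ i j : ℕ, i < p → j < p → i ≠ j → Disjoint (K i) (K j))
    (horb : ∀ i, f^[i] x ∈ interior (K i)) {ε : ℝ} (hε : 0 < ε) (m : ℕ) :
    (#{q ∈ range p ×ˢ range p | ∀ i < m, Metric.diam (K (q.1 + i) ∪ K (q.2 + i)) ≤ ε} : ℝ)
        / p ^ 2 ≤ lowerCorr f x m ε ∧
      lowerCorr f x m ε ≤ upperCorr f x m ε ∧
      upperCorr f x m ε ≤
        (#{q ∈ range p ×ˢ range p | ∀ i < m, setDist (K (q.1 + i)) (K (q.2 + i)) < ε} : ℝ)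
          / p ^ 2 := by
  have hbdd : ∀ i, Bornology.IsBounded (K i) := fun i => by
    obtain ⟨y, z, hyz⟩ := hK i
    exact hyz ▸ isBounded_Icc y z
  refine corr_bounds_of_residue_squeeze f x m ε hp (filter_subset _ _) (filter_subset _ _)
    (fun i j hij k hk => ?_) (fun i j hij => ?_)
  · have hdiam := (mem_filter.mp hij).2 k hk
    rw [hKper.map_mod_add_nat, hKper.map_mod_add_nat] at hdiam
    exact (dist_le_diam_of_mem ((hbdd _).union (hbdd _))
      (mem_union_left _ (interior_subset (horb _)))
      (mem_union_right _ (interior_subset (horb _)))).trans hdiam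
  · refine mem_filter.mpr ⟨mem_product.mpr ⟨mem_range.mpr (Nat.mod_lt _ hp),
      mem_range.mpr (Nat.mod_lt _ hp)⟩, fun k hk => ?_⟩
    rw [hKper.map_mod_add_nat, hKper.map_mod_add_nat]
    exact setDist_lt_of_mem_interior (hK _) (eq_or_disjoint_of_periodic hp hKper hdisj _ _)
      (horb _) (interior_subset (horb _)) hε (hij k hk)

end PeriodicIntervals

lemma eventually_filter_forall_lt_subset {α : Type*} (s : Finset α) (P : α → ℕ → Prop) :
    ∀ᶠ m in atTop, {q ∈ s | ∀ i < m, P q i} ⊆ {q ∈ s | ∀ i, P q i} := by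
  have hq : ∀ q ∈ s, ∀ᶠ m in atTop, (∀ i < m, P q i) → ∀ i, P q i := fun q _ => by
    by_cases h : ∀ i, P q i
    · exact Eventually.of_forall fun _ _ => h
    · obtain ⟨i, hi⟩ := not_forall.mp h
      filter_upwards [eventually_gt_atTop i] with m hm hall using absurd (hall i hm) hi
  filter_upwards [(eventually_all_finset s).mpr hq] with m hm q hqm
  rw [mem_filter] at hqm ⊢
  exact ⟨hqm.1, hm q hqm.1 hqm.2⟩

lemma ciInf_bounds_of_forall_bounds {L U a b : ℕ → ℝ} {α β : ℝ}
    (h : ∀ m, a m ≤ L m ∧ L m ≤ U m ∧ U m ≤ b m) (ha : ∀ m, α ≤ a m) (hb : ∃ m, b m ≤ β) :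
    α ≤ ⨅ m, L m ∧ ⨅ m, L m ≤ ⨅ m, U m ∧ ⨅ m, U m ≤ β := by
  have hL : ∀ m, α ≤ L m := fun m => (ha m).trans (h m).1
  have hU : ∀ m, α ≤ U m := fun m => (hL m).trans (h m).2.1
  obtain ⟨M, hM⟩ := hb
  exact ⟨le_ciInf hL, ciInf_mono ⟨α, forall_mem_range.mpr hL⟩ fun m => (h m).2.1,
    (ciInf_le ⟨α, forall_mem_range.mpr hU⟩ M).trans ((h M).2.2.trans hM)⟩

/-- The two counts are `N°_m(x,t,ε)` and `N_m(x,t,ε)` for the level whose intervals are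
`K 0, …, K (p-1)`; the second conjunct is the case `m = ∞`. -/
theorem stmt_14_general (f : ℝ → ℝ) (x : ℝ)
    (p : ℕ) (hp : 0 < p) (K : ℕ → Set ℝ)
    (hKper : ∀ i, K (i + p) = K i)
    (hK : ∀ i, ∃ y z : ℝ, y < z ∧ K i = Icc y z)
    (hdisj : ∀ i j : ℕ, i < p → j < p → i ≠ j → Disjoint (K i) (K j))
    (horb : ∀ i, f^[i] x ∈ interior (K i))
    (ε : ℝ) (hε : 0 < ε) :
    (∀ m : ℕ, 0 < m →
      ((((Finset.range p ×ˢ Finset.range p).filter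
            (fun q => ∀ i < m, Metric.diam (K (q.1 + i) ∪ K (q.2 + i)) ≤ ε)).card : ℝ)
            / (p : ℝ) ^ 2 ≤ lowerCorr f x m ε ∧
        lowerCorr f x m ε ≤ upperCorr f x m ε ∧
        upperCorr f x m ε ≤
          (((Finset.range p ×ˢ Finset.range p).filter
            (fun q => ∀ i < m, setDist (K (q.1 + i)) (K (q.2 + i)) < ε)).card : ℝ)
            / (p : ℝ) ^ 2)) ∧
    ((((Finset.range p ×ˢ Finset.range p).filter
          (fun q => ∀ i : ℕ, Metric.diam (K (q.1 + i) ∪ K (q.2 + i)) ≤ ε)).card : ℝ)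
          / (p : ℝ) ^ 2 ≤ lowerCorrInf f x ε ∧
      lowerCorrInf f x ε ≤ upperCorrInf f x ε ∧
      upperCorrInf f x ε ≤
        (((Finset.range p ×ˢ Finset.range p).filter
          (fun q => ∀ i : ℕ, setDist (K (q.1 + i)) (K (q.2 + i)) < ε)).card : ℝ)
          / (p : ℝ) ^ 2) := by
  have hbounds := corr_bounds_of_periodic_intervals f x hp hKper
    (fun i => (hK i).imp fun _ ⟨z, _, hKi⟩ => ⟨z, hKi⟩) hdisj horb hε
  refine ⟨fun m _ => hbounds m, ciInf_bounds_of_forall_bounds (fun m => hbounds (m + 1))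
    (fun m => ?_) ?_⟩
  · gcongr
    exact fun hdiam _ => hdiam
  · obtain ⟨M, hM⟩ := ((tendsto_add_atTop_nat 1).eventually
      (eventually_filter_forall_lt_subset (range p ×ˢ range p)
        fun q i => setDist (K (q.1 + i)) (K (q.2 + i)) < ε)).exists
    exact ⟨M, by gcongr⟩

/-- interval-counting bounds for the asymptotic correlation sums:
`N°_m(x,t,ε)/p_t² ≤ C̲_m(x,ε) ≤ C̄_m(x,ε) ≤ N_m(x,t,ε)/p_t²` (for a fixed level
of the solenoidal structure, with `K i` the `p`-periodically indexed intervals,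
`f(K_i) ⊆ K_{i+1}`, and the orbit of `x` avoiding the boundaries).
Here `dist_m(K_a,K_b) < ε ↔ ∀ i < m, dist(K_{a+i},K_{b+i}) < ε` and
`diam_m(K_a,K_b) ≤ ε ↔ ∀ i < m, diam(K_{a+i} ∪ K_{b+i}) ≤ ε`; the case
`m = ∞` is stated with the quantifier over all `i`. -/
theorem stmt_14 (f : ℝ → ℝ) (hf : Continuous f) (x : ℝ)
    (p : ℕ) (hp : 0 < p) (K : ℕ → Set ℝ)
    (hKper : ∀ i, K (i + p) = K i)
    (hK : ∀ i, ∃ y z : ℝ, y < z ∧ K i = Icc y z)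
    (hdisj : ∀ i j : ℕ, i < p → j < p → i ≠ j → Disjoint (K i) (K j))
    (hdyn : ∀ i, f '' K i ⊆ K (i + 1))
    (horb : ∀ i, f^[i] x ∈ interior (K i))
    (ε : ℝ) (hε : 0 < ε) :
    (∀ m : ℕ, 0 < m →
      ((((Finset.range p ×ˢ Finset.range p).filter
            (fun q => ∀ i < m, Metric.diam (K (q.1 + i) ∪ K (q.2 + i)) ≤ ε)).card : ℝ)
            / (p : ℝ) ^ 2 ≤ lowerCorr f x m ε ∧
        lowerCorr f x m ε ≤ upperCorr f x m ε ∧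
        upperCorr f x m ε ≤
          (((Finset.range p ×ˢ Finset.range p).filter
            (fun q => ∀ i < m, setDist (K (q.1 + i)) (K (q.2 + i)) < ε)).card : ℝ)
            / (p : ℝ) ^ 2)) ∧
    ((((Finset.range p ×ˢ Finset.range p).filter
          (fun q => ∀ i : ℕ, Metric.diam (K (q.1 + i) ∪ K (q.2 + i)) ≤ ε)).card : ℝ)
          / (p : ℝ) ^ 2 ≤ lowerCorrInf f x ε ∧
      lowerCorrInf f x ε ≤ upperCorrInf f x ε ∧
      upperCorrInf f x ε ≤
        (((Finset.range p ×ˢ Finset.range p).filter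
          (fun q => ∀ i : ℕ, setDist (K (q.1 + i)) (K (q.2 + i)) < ε)).card : ℝ)
          / (p : ℝ) ^ 2) :=
  stmt_14_general f x p hp K hKper hK hdisj horb ε hε
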